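/- Let p ∈ [0,1]^N be η-perfect in the one-step game Γ_v (η ≥ 0), let m be a player with p^m ∈ (0,1], let λ ∈ [0,1], and set p̂ := (p^{-m}, (1−λ)p^m + λ). Then p̂ is η̃-perfect in Γ_v, where η̃ := max(2λ·r_max + (1−λ)·η, η) and r_max := max_{n,∅≠S} |r_S^n|. -/
import Mathlib


open Finset

noncomputable section

/-- probability that exactly the coalition `S` quits under profile `p` -/
def rho {N : ℕ} (p : Fin N → ℝ) (S : Finset (Fin N)) : ℝ :=
  (∏ i ∈ S, p i) * ∏ j ∈ Sᶜ, (1 - p j)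

/-- expected payoff of player `n` in the one-step game `Γ_v` -/
def gamma {N : ℕ} (v : Fin N → ℝ) (r : Finset (Fin N) → Fin N → ℝ)
    (p : Fin N → ℝ) (n : Fin N) : ℝ :=
  rho p ∅ * v n + ∑ S ∈ univ.filter (fun S => S ≠ (∅ : Finset (Fin N))), rho p S * r S n

/-- `p` is an `ε`-equilibrium in the one-step game -/
def IsEquilibrium {N : ℕ} (v : Fin N → ℝ) (r : Finset (Fin N) → Fin N → ℝ)
    (ε : ℝ) (p : Fin N → ℝ) : Prop :=
  ∀ n : Fin N, ∀ q : ℝ, 0 ≤ q → q ≤ 1 →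
    gamma v r (Function.update p n q) n - ε ≤ gamma v r p n

/-- `p` is `ε`-perfect in the one-step game -/
def IsPerfect {N : ℕ} (v : Fin N → ℝ) (r : Finset (Fin N) → Fin N → ℝ)
    (ε : ℝ) (p : Fin N → ℝ) : Prop :=
  ∀ n : Fin N,
    (p n = 0 → gamma v r (Function.update p n 1) n - gamma v r (Function.update p n 0) n ≤ ε) ∧
    (0 < p n → p n < 1 →
      |gamma v r (Function.update p n 1) n - gamma v r (Function.update p n 0) n| ≤ ε) ∧
    (p n = 1 → -ε ≤ gamma v r (Function.update p n 1) n - gamma v r (Function.update p n 0) n)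

lemma rho_nonneg {N : ℕ} {Q : Fin N → ℝ} (hQ : ∀ i, 0 ≤ Q i ∧ Q i ≤ 1) (S : Finset (Fin N)) :
    0 ≤ rho Q S :=
  mul_nonneg (Finset.prod_nonneg fun i _ => (hQ i).1)
    (Finset.prod_nonneg fun j _ => by linarith [(hQ j).2])

lemma sum_rho {N : ℕ} (Q : Fin N → ℝ) : ∑ S : Finset (Fin N), rho Q S = 1 := by
  have h := Finset.prod_add Q (fun j => 1 - Q j) (univ : Finset (Fin N))
  simp only [Finset.powerset_univ] at h
  have h1 : ∏ i : Fin N, (Q i + (1 - Q i)) = 1 := by simp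
  rw [h1] at h
  have h2 : ∑ S : Finset (Fin N), rho Q S
      = ∑ S : Finset (Fin N), (∏ i ∈ S, Q i) * ∏ i ∈ univ \ S, (1 - Q i) := by
    refine Finset.sum_congr rfl fun S _ => ?_
    unfold rho
    rw [Finset.compl_eq_univ_sdiff]
  rw [h2]
  exact h.symm

lemma rho_affine {N : ℕ} (P : Fin N → ℝ) (m : Fin N) (t : ℝ) (S : Finset (Fin N)) :
    rho (Function.update P m t) S
      = (1 - t) * rho (Function.update P m 0) S + t * rho (Function.update P m 1) S := by
  unfold rho
  by_cases hm : m ∈ S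
  · have hc : ∀ u : ℝ, ∏ j ∈ Sᶜ, (1 - Function.update P m u j) = ∏ j ∈ Sᶜ, (1 - P j) := by
      intro u
      refine Finset.prod_congr rfl fun j hj => ?_
      have hjm : j ≠ m := by rintro rfl; exact (Finset.mem_compl.1 hj) hm
      rw [Function.update_of_ne hjm]
    rw [hc, hc, hc, Finset.prod_update_of_mem hm, Finset.prod_update_of_mem hm,
      Finset.prod_update_of_mem hm]
    ring
  · have hc : ∀ u : ℝ, ∏ i ∈ S, Function.update P m u i = ∏ i ∈ S, P i := by
      intro u
      refine Finset.prod_congr rfl fun i hi => ?_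
      have him : i ≠ m := by rintro rfl; exact hm hi
      rw [Function.update_of_ne him]
    have hmc : m ∈ Sᶜ := Finset.mem_compl.2 hm
    have hc2 : ∀ u : ℝ, ∏ j ∈ Sᶜ, (1 - Function.update P m u j)
        = (1 - u) * ∏ j ∈ Sᶜ \ {m}, (1 - P j) := by
      intro u
      rw [Finset.prod_eq_mul_prod_sdiff_singleton_of_mem hmc, Function.update_self]
      congr 1
      refine Finset.prod_congr rfl fun j hj => ?_
      have hjm : j ≠ m := by simpa using (Finset.mem_sdiff.1 hj).2
      rw [Function.update_of_ne hjm]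
    rw [hc, hc, hc, hc2, hc2, hc2]
    ring

lemma gamma_affine {N : ℕ} (v : Fin N → ℝ) (r : Finset (Fin N) → Fin N → ℝ)
    (P : Fin N → ℝ) (m n : Fin N) (t : ℝ) :
    gamma v r (Function.update P m t) n
      = (1 - t) * gamma v r (Function.update P m 0) n
        + t * gamma v r (Function.update P m 1) n := by
  unfold gamma
  simp only [rho_affine P m t]
  have hsplit : ∑ S ∈ univ.filter (fun S => S ≠ (∅ : Finset (Fin N))),
      ((1 - t) * rho (Function.update P m 0) S + t * rho (Function.update P m 1) S) * r S n
      = (1 - t) * (∑ S ∈ univ.filter (fun S => S ≠ (∅ : Finset (Fin N))),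
          rho (Function.update P m 0) S * r S n)
        + t * (∑ S ∈ univ.filter (fun S => S ≠ (∅ : Finset (Fin N))),
          rho (Function.update P m 1) S * r S n) := by
    rw [Finset.mul_sum, Finset.mul_sum, ← Finset.sum_add_distrib]
    exact Finset.sum_congr rfl fun S _ => by ring
  rw [hsplit]
  ring

lemma update_mem {N : ℕ} {p : Fin N → ℝ} (hp : ∀ i, 0 ≤ p i ∧ p i ≤ 1) (m : Fin N)
    {q : ℝ} (h0 : 0 ≤ q) (h1 : q ≤ 1) :
    ∀ i, 0 ≤ Function.update p m q i ∧ Function.update p m q i ≤ 1 := by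
  intro i
  by_cases h : i = m
  · subst h; simp [h0, h1]
  · rw [Function.update_of_ne h]; exact hp i

lemma gamma_abs_le {N : ℕ} {v : Fin N → ℝ} {r : Finset (Fin N) → Fin N → ℝ} {rmax : ℝ}
    (hr : IsGreatest {x : ℝ | ∃ (n : Fin N) (S : Finset (Fin N)), S ≠ ∅ ∧ x = |r S n|} rmax)
    (Q : Fin N → ℝ) (hQ : ∀ i, 0 ≤ Q i ∧ Q i ≤ 1) (j : Fin N) (hj : Q j = 1) (n : Fin N) :
    |gamma v r Q n| ≤ rmax := by
  obtain ⟨n0, S0, hS0, hrm⟩ := hr.1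
  have hrmax0 : 0 ≤ rmax := hrm ▸ abs_nonneg _
  unfold gamma
  have h0 : rho Q ∅ = 0 := by
    unfold rho
    rw [Finset.prod_empty, one_mul]
    exact Finset.prod_eq_zero (show j ∈ (∅ : Finset (Fin N))ᶜ by simp) (by rw [hj]; ring)
  rw [h0, zero_mul, zero_add]
  calc |∑ S ∈ univ.filter (fun S => S ≠ (∅ : Finset (Fin N))), rho Q S * r S n|
      ≤ ∑ S ∈ univ.filter (fun S => S ≠ (∅ : Finset (Fin N))), |rho Q S * r S n| :=
        Finset.abs_sum_le_sum_abs _ _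
    _ ≤ ∑ S ∈ univ.filter (fun S => S ≠ (∅ : Finset (Fin N))), rho Q S * rmax := by
        refine Finset.sum_le_sum fun S hS => ?_
        rw [abs_mul, abs_of_nonneg (rho_nonneg hQ S)]
        exact mul_le_mul_of_nonneg_left (hr.2 ⟨n, S, (Finset.mem_filter.1 hS).2, rfl⟩)
          (rho_nonneg hQ S)
    _ = (∑ S ∈ univ.filter (fun S => S ≠ (∅ : Finset (Fin N))), rho Q S) * rmax :=
        (Finset.sum_mul _ _ _).symm
    _ ≤ 1 * rmax := by
        refine mul_le_mul_of_nonneg_right ?_ hrmax0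
        rw [← sum_rho Q]
        exact Finset.sum_le_sum_of_subset_of_nonneg (Finset.filter_subset _ _)
          (fun S _ _ => rho_nonneg hQ S)
    _ = rmax := one_mul _

lemma gamma_key {N : ℕ} (v : Fin N → ℝ) (r : Finset (Fin N) → Fin N → ℝ)
    (p : Fin N → ℝ) (m n : Fin N) (hnm : n ≠ m) (lam : ℝ) (b : ℝ) :
    gamma v r (Function.update (Function.update p m ((1 - lam) * p m + lam)) n b) n
      = (1 - lam) * gamma v r (Function.update p n b) n
        + lam * gamma v r (Function.update (Function.update p n b) m 1) n := by
  have hcomm : Function.update (Function.update p m ((1 - lam) * p m + lam)) n b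
      = Function.update (Function.update p n b) m ((1 - lam) * p m + lam) :=
    Function.update_comm (fun h => hnm h.symm) _ _ _
  have hP : Function.update (Function.update p n b) m (p m) = Function.update p n b := by
    have : (Function.update p n b) m = p m := Function.update_of_ne (fun h => hnm h.symm) _ _
    rw [← this, Function.update_eq_self]
  have h1 := gamma_affine v r (Function.update p n b) m n ((1 - lam) * p m + lam)
  have h2 := gamma_affine v r (Function.update p n b) m n (p m)
  rw [hP] at h2
  rw [hcomm, h1]
  linear_combination (lam - 1) * h2

theorem perfect_hat (N : ℕ) (hN : 0 < N) (v : Fin N → ℝ)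
    (r : Finset (Fin N) → Fin N → ℝ) (rmax : ℝ)
    (hr : IsGreatest {x : ℝ | ∃ (n : Fin N) (S : Finset (Fin N)),
            S ≠ ∅ ∧ x = |r S n|} rmax)
    (η : ℝ) (hη : 0 ≤ η)
    (p : Fin N → ℝ) (hp : ∀ i, 0 ≤ p i ∧ p i ≤ 1)
    (hperf : IsPerfect v r η p)
    (m : Fin N) (hm : 0 < p m) (hm1 : p m ≤ 1)
    (lam : ℝ) (hlam : 0 ≤ lam ∧ lam ≤ 1) :
    IsPerfect v r (max (2 * lam * rmax + (1 - lam) * η) η)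
      (Function.update p m ((1 - lam) * p m + lam)) := by
  obtain ⟨hlam0, hlam1⟩ := hlam
  obtain ⟨n0, S0, hS0, hrm⟩ := hr.1
  have hrmax0 : 0 ≤ rmax := hrm ▸ abs_nonneg _
  have h1lam : (0:ℝ) ≤ 1 - lam := by linarith
  have hq0 : 0 < (1 - lam) * p m + lam := by nlinarith [mul_nonneg h1lam hm.le]
  have hqge : p m ≤ (1 - lam) * p m + lam := by
    nlinarith [mul_nonneg hlam0 (by linarith : (0:ℝ) ≤ 1 - p m)]
  have hηE : η ≤ max (2 * lam * rmax + (1 - lam) * η) η := le_max_right _ _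
  have hbE : 2 * lam * rmax + (1 - lam) * η ≤ max (2 * lam * rmax + (1 - lam) * η) η :=
    le_max_left _ _
  intro n
  by_cases hnm : n = m
  · subst hnm
    have e1 : Function.update (Function.update p n ((1 - lam) * p n + lam)) n (1:ℝ)
        = Function.update p n 1 := Function.update_idem _ _ _
    have e0 : Function.update (Function.update p n ((1 - lam) * p n + lam)) n (0:ℝ)
        = Function.update p n 0 := Function.update_idem _ _ _
    refine ⟨?_, ?_, ?_⟩
    · intro h
      rw [Function.update_self] at h
      linarith
    · intro _ h1
      rw [Function.update_self] at h1
      have hpn1 : p n < 1 := lt_of_le_of_lt hqge h1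
      rw [e1, e0]
      exact le_trans ((hperf n).2.1 hm hpn1) hηE
    · intro _
      rw [e1, e0]
      rcases lt_or_eq_of_le hm1 with hlt | heq
      · have := abs_le.1 ((hperf n).2.1 hm hlt)
        linarith
      · have := (hperf n).2.2 heq
        linarith
  · have hpn : Function.update p m ((1 - lam) * p m + lam) n = p n :=
      Function.update_of_ne hnm _ _
    have hk1 := gamma_key v r p m n hnm lam 1
    have hk0 := gamma_key v r p m n hnm lam 0
    have hG1 : |gamma v r (Function.update (Function.update p n 1) m 1) n| ≤ rmax :=
      gamma_abs_le hr _ (update_mem (update_mem hp n zero_le_one le_rfl) m zero_le_one le_rfl)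
        m (Function.update_self _ _ _) n
    have hG0 : |gamma v r (Function.update (Function.update p n 0) m 1) n| ≤ rmax :=
      gamma_abs_le hr _ (update_mem (update_mem hp n le_rfl zero_le_one) m zero_le_one le_rfl)
        m (Function.update_self _ _ _) n
    have hGd := abs_le.1 hG1
    have hGd' := abs_le.1 hG0
    refine ⟨?_, ?_, ?_⟩
    · intro h
      rw [hpn] at h
      have hD := (hperf n).1 h
      rw [hk1, hk0]
      have hstep : (1 - lam) * gamma v r (Function.update p n 1) n
            + lam * gamma v r (Function.update (Function.update p n 1) m 1) n
            - ((1 - lam) * gamma v r (Function.update p n 0) n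
            + lam * gamma v r (Function.update (Function.update p n 0) m 1) n)
          ≤ 2 * lam * rmax + (1 - lam) * η := by
        nlinarith [hD, hGd.2, hGd'.1, hlam0, h1lam]
      linarith
    · intro h0 h1
      rw [hpn] at h0 h1
      have hD := abs_le.1 ((hperf n).2.1 h0 h1)
      rw [hk1, hk0, abs_le]
      constructor
      · nlinarith [hD.1, hGd.1, hGd'.2, hlam0, h1lam, hbE, hηE]
      · nlinarith [hD.2, hGd.2, hGd'.1, hlam0, h1lam, hbE, hηE]
    · intro h
      rw [hpn] at h
      have hD := (hperf n).2.2 h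
      rw [hk1, hk0]
      have hstep : -(2 * lam * rmax + (1 - lam) * η)
          ≤ (1 - lam) * gamma v r (Function.update p n 1) n
            + lam * gamma v r (Function.update (Function.update p n 1) m 1) n
            - ((1 - lam) * gamma v r (Function.update p n 0) n
            + lam * gamma v r (Function.update (Function.update p n 0) m 1) n) := by
        nlinarith [hD, hGd.1, hGd'.2, hlam0, h1lam]
      linarith
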